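/- arXiv:2406.01453 — 3 statements merged into one kernel-verified Lean document; each statement's English description precedes it below -/
import Mathlib

section
/- Given f ∈ L^p(N) (1 ≤ p < ∞), define f^♯(z,t₁,t₂,u) := 2 χ(t₁+t₂) f(z, t₁+u, t₂+u), where χ is a nonnegative smooth even function supported in [1/2,1] ∪ [−1,−1/2] with ∫_ℝ χ = 1. Then f^♯ ∈ L^p(Ñ) with ‖f^♯‖_{L^p(Ñ)}^p = C_p ‖f‖_{L^p(N)}^p where C_p = ∫_ℝ 2^{p−1} χ(u)^p du, and π_*(f^♯) = f. Moreover, if f is smooth and compactly supported then so is f^♯. -/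
noncomputable section

open MeasureTheory

/-- The lift f^♯(z,t₁,t₂,u) = 2 χ(t₁+t₂) f(z, t₁+u, t₂+u). -/
def fSharp {N : ℕ} (χ : ℝ → ℝ) (f : (Fin N → ℂ) × ℝ × ℝ → ℂ) :
    (Fin N → ℂ) × ℝ × ℝ × ℝ → ℂ :=
  fun x => (2 * χ (x.2.1 + x.2.2.1) : ℝ) * f (x.1, x.2.1 + x.2.2.2, x.2.2.1 + x.2.2.2)

/-- Push-forward (π_*F)(z,t₁,t₂) = ∫_ℝ F(z, t₁−u, t₂−u, u) du. -/
def pushForward {N : ℕ} (F : (Fin N → ℂ) × ℝ × ℝ × ℝ → ℂ) :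
    (Fin N → ℂ) × ℝ × ℝ → ℂ :=
  fun x => ∫ u : ℝ, F (x.1, x.2.1 - u, x.2.2 - u, u)

namespace FSharpAux

open Measure Set ENNReal

/-- `∫ v, k (c - 2 v) = (1/2) ∫ k` for any function `k`. -/
lemma integral_comp_affine (k : ℝ → ℝ) (c : ℝ) :
    ∫ v : ℝ, k (c - 2 * v) = (1 / 2) * ∫ w : ℝ, k w := by
  have h1 : (∫ v : ℝ, k (c - 2 * v)) = ∫ v : ℝ, (fun w => k (c - w)) (2 * v) := rfl
  rw [h1, MeasureTheory.Measure.integral_comp_mul_left (fun w => k (c - w)) 2,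
    integral_sub_left_eq_self (fun w => k w) volume c]
  norm_num

/-- The rotation `(a,(b,c)) ↦ (c,(a,b))` preserves volume on ℝ³. -/
lemma mp_rot : MeasurePreserving (fun q : ℝ × ℝ × ℝ => (q.2.2, q.1, q.2.1))
    (volume : Measure (ℝ × ℝ × ℝ)) volume := by
  have h1 : MeasurePreserving (MeasurableEquiv.prodAssoc.symm :
      ℝ × ℝ × ℝ ≃ᵐ (ℝ × ℝ) × ℝ) volume volume :=
    (measurePreserving_prodAssoc (volume : Measure ℝ) volume volume).symm _
  have h2 : MeasurePreserving (Prod.swap : (ℝ × ℝ) × ℝ → ℝ × (ℝ × ℝ)) volume volume :=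
    measurePreserving_swap
  exact h2.comp h1

/-- The inverse rotation `(a,(b,c)) ↦ (b,(c,a))` preserves volume on ℝ³. -/
lemma mp_rot' : MeasurePreserving (fun q : ℝ × ℝ × ℝ => (q.2.1, q.2.2, q.1))
    (volume : Measure (ℝ × ℝ × ℝ)) volume := by
  have h2 : MeasurePreserving (Prod.swap : ℝ × (ℝ × ℝ) → (ℝ × ℝ) × ℝ) volume volume :=
    measurePreserving_swap
  have h1 : MeasurePreserving (MeasurableEquiv.prodAssoc :
      (ℝ × ℝ) × ℝ ≃ᵐ ℝ × ℝ × ℝ) volume volume :=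
    measurePreserving_prodAssoc (volume : Measure ℝ) volume volume
  exact h1.comp h2

/-- The shear `(a,(b,c)) ↦ (a, (b+a, c+a))` preserves volume on ℝ³. -/
lemma mp_shear : MeasurePreserving (fun q : ℝ × ℝ × ℝ => (q.1, q.2.1 + q.1, q.2.2 + q.1))
    (volume : Measure (ℝ × ℝ × ℝ)) volume := by
  have := (MeasurePreserving.id (volume : Measure ℝ)).skew_product
    (g := fun a (p : ℝ × ℝ) => (p.1 + a, p.2 + a))
    (by fun_prop)
    (Filter.Eventually.of_forall fun a =>
      map_add_right_eq_self (volume : Measure (ℝ × ℝ)) (a, a))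
  exact this

/-- The shear `S₃(t₁,t₂,u) = (t₁+u, t₂+u, u)` preserves volume on ℝ³. -/
lemma mp_S3 : MeasurePreserving (fun q : ℝ × ℝ × ℝ => (q.1 + q.2.2, q.2.1 + q.2.2, q.2.2))
    (volume : Measure (ℝ × ℝ × ℝ)) volume := by
  have h := (mp_rot'.comp mp_shear).comp mp_rot
  convert h using 1
  rfl

/-- The full shear `S(z,t₁,t₂,u) = (z, t₁+u, t₂+u, u)`. -/
lemma mp_S {N : ℕ} : MeasurePreserving
    (fun x : (Fin N → ℂ) × ℝ × ℝ × ℝ => (x.1, x.2.1 + x.2.2.2, x.2.2.1 + x.2.2.2, x.2.2.2))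
    volume volume := by
  exact (MeasurePreserving.id (volume : Measure (Fin N → ℂ))).prod mp_S3

/-- The projection `(z,t₁,t₂,u) ↦ (z,t₁,t₂)` is quasi-measure-preserving. -/
lemma qmp_proj {N : ℕ} : Measure.QuasiMeasurePreserving
    (fun x : (Fin N → ℂ) × ℝ × ℝ × ℝ => (x.1, x.2.1, x.2.2.1))
    volume volume := by
  have e1 : MeasurePreserving
      (fun x : (Fin N → ℂ) × ℝ × ℝ × ℝ => (x.1, ((x.2.1, x.2.2.1), x.2.2.2)))
      volume volume := by
    exact (MeasurePreserving.id (volume : Measure (Fin N → ℂ))).prod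
      ((measurePreserving_prodAssoc (volume : Measure ℝ) volume volume).symm
        MeasurableEquiv.prodAssoc)
  have e2 : MeasurePreserving
      (fun y : (Fin N → ℂ) × (ℝ × ℝ) × ℝ => ((y.1, y.2.1.1, y.2.1.2), y.2.2))
      volume volume := by
    have h := (measurePreserving_prodAssoc (volume : Measure (Fin N → ℂ))
      (volume : Measure (ℝ × ℝ)) (volume : Measure ℝ)).symm MeasurableEquiv.prodAssoc
    exact h
  have hfst : Measure.QuasiMeasurePreserving
      (Prod.fst : ((Fin N → ℂ) × ℝ × ℝ) × ℝ → (Fin N → ℂ) × ℝ × ℝ) volume volume := by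
    refine ⟨measurable_fst, ?_⟩
    rw [volume_eq_prod, Measure.map_fst_prod]
    exact Measure.AbsolutelyContinuous.rfl.smul_left _
  have := (hfst.comp (e2.quasiMeasurePreserving.comp e1.quasiMeasurePreserving))
  exact this

/-- The map `Φ(z,t₁,t₂,u) = (z, t₁+u, t₂+u)` is quasi-measure-preserving. -/
lemma qmp_Phi {N : ℕ} : Measure.QuasiMeasurePreserving
    (fun x : (Fin N → ℂ) × ℝ × ℝ × ℝ => (x.1, x.2.1 + x.2.2.2, x.2.2.1 + x.2.2.2))
    volume volume := by
  have h := qmp_proj.comp (mp_S (N := N)).quasiMeasurePreserving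
  exact h

lemma lint3 {α : Type*} [MeasureSpace α] [SigmaFinite (volume : Measure α)]
    (G : α × ℝ × ℝ → ℝ≥0∞) (hG : Measurable G) :
    ∫⁻ y, G y = ∫⁻ z, ∫⁻ a, ∫⁻ b, G (z, a, b) := by
  rw [volume_eq_prod, lintegral_prod _ hG.aemeasurable]
  refine lintegral_congr fun z => ?_
  exact lintegral_prod (fun w => G (z, w)) ((hG.comp measurable_prodMk_left).aemeasurable)

lemma lint4 {α : Type*} [MeasureSpace α] [SigmaFinite (volume : Measure α)]
    (G : α × ℝ × ℝ × ℝ → ℝ≥0∞) (hG : Measurable G) :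
    ∫⁻ x, G x = ∫⁻ z, ∫⁻ a, ∫⁻ b, ∫⁻ c, G (z, a, b, c) := by
  rw [volume_eq_prod, lintegral_prod _ hG.aemeasurable]
  refine lintegral_congr fun z => ?_
  exact lint3 (fun w => G (z, w)) (hG.comp measurable_prodMk_left)


/-- The inner 1D integral: `∫⁻ v, ofReal ((2 χ(c - 2v))^p) = ofReal (∫ 2^(p-1) χ^p)`. -/
lemma inner_int (p : ℝ) (hp : 1 ≤ p) (χ : ℝ → ℝ) (hχ0 : ∀ t, 0 ≤ χ t) (hχc : Continuous χ)
    (hχsupp : Function.support χ ⊆ Set.Icc (1/2 : ℝ) 1 ∪ Set.Icc (-1 : ℝ) (-(1/2))) (c : ℝ) :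
    ∫⁻ v : ℝ, ENNReal.ofReal ((2 * χ (c - 2 * v)) ^ p) =
      ENNReal.ofReal (∫ u : ℝ, 2 ^ (p - 1) * χ u ^ p) := by
  have hp0 : (0:ℝ) < p := lt_of_lt_of_le one_pos hp
  set k : ℝ → ℝ := fun w => (2 * χ w) ^ p with hk
  have hkcont : Continuous k := (continuous_const.mul hχc).rpow_const (fun w => Or.inr hp0.le)
  have hksupp : HasCompactSupport k := by
    apply HasCompactSupport.intro (isCompact_Icc (a := (-1:ℝ)) (b := 1))
    intro w hw
    have hχw : χ w = 0 := by
      by_contra h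
      rcases hχsupp h with h1 | h1
      · exact hw ⟨by linarith [h1.1], h1.2⟩
      · exact hw ⟨h1.1, by linarith [h1.2]⟩
    simp [hk, hχw, Real.zero_rpow hp0.ne']
  set φ : ℝ ≃ₜ ℝ := (Homeomorph.mulLeft₀ (-2 : ℝ) (by norm_num)).trans
    (Homeomorph.addLeft c) with hφ
  have hint : Integrable (fun v : ℝ => k (c - 2 * v)) := by
    have heq : (fun v : ℝ => k (c - 2 * v)) = k ∘ φ := by
      funext v
      simp only [hφ, Function.comp_apply, Homeomorph.trans_apply,
        Homeomorph.coe_mulLeft₀, Homeomorph.coe_addLeft]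
      ring_nf
    rw [heq]
    exact (hkcont.comp φ.continuous).integrable_of_hasCompactSupport
      (hksupp.comp_homeomorph φ)
  rw [← ofReal_integral_eq_lintegral_ofReal hint
    (Filter.Eventually.of_forall fun v =>
      Real.rpow_nonneg (mul_nonneg (by norm_num) (hχ0 _)) p)]
  congr 1
  rw [integral_comp_affine k c]
  have hkw : ∀ w, k w = 2 * (2 ^ (p - 1) * χ w ^ p) := by
    intro w
    show (2 * χ w) ^ p = 2 * (2 ^ (p - 1) * χ w ^ p)
    rw [Real.mul_rpow (by norm_num) (hχ0 w)]
    have h2 : (2:ℝ) ^ p = 2 * 2 ^ (p - 1) := by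
      rw [Real.rpow_sub (by norm_num) p 1, Real.rpow_one]
      field_simp
    rw [h2]; ring
  simp_rw [hkw]
  rw [MeasureTheory.integral_const_mul]
  ring

/-- Main lintegral identity for a measurable `g`. -/
lemma key {N : ℕ} (p : ℝ) (hp : 1 ≤ p) (χ : ℝ → ℝ) (hχ0 : ∀ t, 0 ≤ χ t) (hχc : Continuous χ)
    (hχsupp : Function.support χ ⊆ Set.Icc (1/2 : ℝ) 1 ∪ Set.Icc (-1 : ℝ) (-(1/2)))
    (g : (Fin N → ℂ) × ℝ × ℝ → ℂ) (hg : Measurable g) :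
    ∫⁻ x, ENNReal.ofReal (‖fSharp χ g x‖ ^ p) =
      ENNReal.ofReal (∫ u : ℝ, 2 ^ (p - 1) * χ u ^ p) * ∫⁻ y, ENNReal.ofReal (‖g y‖ ^ p) := by
  have hp0 : (0:ℝ) < p := lt_of_lt_of_le one_pos hp
  set H : (Fin N → ℂ) × ℝ × ℝ × ℝ → ℝ≥0∞ := fun y =>
    ENNReal.ofReal ((2 * χ (y.2.1 + y.2.2.1 - 2 * y.2.2.2)) ^ p) *
      ENNReal.ofReal (‖g (y.1, y.2.1, y.2.2.1)‖ ^ p) with hH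
  have hHm : Measurable H := by
    apply Measurable.fun_mul
    · have c1 : Continuous fun y : (Fin N → ℂ) × ℝ × ℝ × ℝ =>
          (2 * χ (y.2.1 + y.2.2.1 - 2 * y.2.2.2)) ^ p :=
        (continuous_const.mul (hχc.comp (by fun_prop))).rpow_const (fun _ => Or.inr hp0.le)
      exact ENNReal.measurable_ofReal.comp c1.measurable
    · have m1 : Measurable fun y : (Fin N → ℂ) × ℝ × ℝ × ℝ =>
          g (y.1, y.2.1, y.2.2.1) := hg.comp (by fun_prop)
      exact ENNReal.measurable_ofReal.comp ((m1.norm).pow measurable_const)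
  have hgm : Measurable fun y : (Fin N → ℂ) × ℝ × ℝ => ENNReal.ofReal (‖g y‖ ^ p) :=
    ENNReal.measurable_ofReal.comp ((hg.norm).pow measurable_const)
  have step1 : ∫⁻ x, ENNReal.ofReal (‖fSharp χ g x‖ ^ p) =
      ∫⁻ x : (Fin N → ℂ) × ℝ × ℝ × ℝ,
        H (x.1, x.2.1 + x.2.2.2, x.2.2.1 + x.2.2.2, x.2.2.2) := by
    refine lintegral_congr fun x => ?_
    have h1 : ‖fSharp χ g x‖ = (2 * χ (x.2.1 + x.2.2.1)) *
        ‖g (x.1, x.2.1 + x.2.2.2, x.2.2.1 + x.2.2.2)‖ := by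
      rw [show fSharp χ g x = ((2 * χ (x.2.1 + x.2.2.1) : ℝ) : ℂ) *
          g (x.1, x.2.1 + x.2.2.2, x.2.2.1 + x.2.2.2) from rfl]
      rw [norm_mul, Complex.norm_real, Real.norm_eq_abs,
        abs_of_nonneg (mul_nonneg (by norm_num) (hχ0 _))]
    rw [h1, Real.mul_rpow (mul_nonneg (by norm_num) (hχ0 _)) (norm_nonneg _),
      ENNReal.ofReal_mul (Real.rpow_nonneg (mul_nonneg (by norm_num) (hχ0 _)) p)]
    have harg : x.2.1 + x.2.2.2 + (x.2.2.1 + x.2.2.2) - 2 * x.2.2.2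
        = x.2.1 + x.2.2.1 := by ring
    simp only [hH, harg]
  have step2 : (∫⁻ x : (Fin N → ℂ) × ℝ × ℝ × ℝ,
      H (x.1, x.2.1 + x.2.2.2, x.2.2.1 + x.2.2.2, x.2.2.2)) = ∫⁻ y, H y :=
    (mp_S (N := N)).lintegral_comp hHm
  have inner : ∀ (z : Fin N → ℂ) (a b : ℝ), (∫⁻ c : ℝ, H (z, a, b, c)) =
      ENNReal.ofReal (∫ u : ℝ, 2 ^ (p - 1) * χ u ^ p) *
        ENNReal.ofReal (‖g (z, a, b)‖ ^ p) := by
    intro z a b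
    have hc : ∀ c : ℝ, H (z, a, b, c) =
        ENNReal.ofReal ((2 * χ (a + b - 2 * c)) ^ p) *
          ENNReal.ofReal (‖g (z, a, b)‖ ^ p) := fun c => rfl
    simp_rw [hc]
    rw [lintegral_mul_const' _ _ ENNReal.ofReal_ne_top,
      inner_int p hp χ hχ0 hχc hχsupp (a + b)]
  have step3 : (∫⁻ y, H y) = ENNReal.ofReal (∫ u : ℝ, 2 ^ (p - 1) * χ u ^ p) *
      ∫⁻ y, ENNReal.ofReal (‖g y‖ ^ p) := by
    rw [lint4 H hHm, lint3 _ hgm]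
    simp_rw [inner]
    simp_rw [lintegral_const_mul' (ENNReal.ofReal (∫ u : ℝ, 2 ^ (p - 1) * χ u ^ p)) _
      ENNReal.ofReal_ne_top]
  rw [step1, step2, step3]

end FSharpAux

open FSharpAux Set ENNReal

/-- if f ∈ L^p(N) (1 ≤ p < ∞) then f^♯ ∈ L^p(Ñ) with
‖f^♯‖_p^p = C_p ‖f‖_p^p where C_p = ∫ 2^{p−1} χ(u)^p du, and π_*(f^♯) = f;
moreover, f smooth and compactly supported implies f^♯ smooth and compactly supported. -/
theorem fSharp_properties {N : ℕ} (p : ℝ) (hp : 1 ≤ p) (χ : ℝ → ℝ)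
    (hχ0 : ∀ t, 0 ≤ χ t) (hχsmooth : ContDiff ℝ (⊤ : ℕ∞) χ)
    (hχsupp : Function.support χ ⊆ Set.Icc (1/2 : ℝ) 1 ∪ Set.Icc (-1 : ℝ) (-(1/2)))
    (hχeven : ∀ t, χ (-t) = χ t) (hχint : ∫ t : ℝ, χ t = 1)
    (f : (Fin N → ℂ) × ℝ × ℝ → ℂ) (hf : MemLp f (ENNReal.ofReal p)) :
    MemLp (fSharp χ f) (ENNReal.ofReal p) ∧
    (∫ x, ‖fSharp χ f x‖ ^ p) = (∫ u : ℝ, 2 ^ (p - 1) * χ u ^ p) * ∫ y, ‖f y‖ ^ p ∧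
    pushForward (fSharp χ f) = f ∧
    ((ContDiff ℝ (⊤ : ℕ∞) f ∧ HasCompactSupport f) →
      (ContDiff ℝ (⊤ : ℕ∞) (fSharp χ f) ∧ HasCompactSupport (fSharp χ f))) := by
  have hp0 : (0:ℝ) < p := lt_of_lt_of_le one_pos hp
  have hχc : Continuous χ := hχsmooth.continuous
  have hpne0 : ENNReal.ofReal p ≠ 0 := by
    simp only [ne_eq, ENNReal.ofReal_eq_zero, not_le]; linarith
  have hC0 : (0:ℝ) ≤ ∫ u : ℝ, 2 ^ (p - 1) * χ u ^ p :=
    integral_nonneg fun u =>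
      mul_nonneg (Real.rpow_nonneg (by norm_num) _) (Real.rpow_nonneg (hχ0 u) _)
  -- measurable representative
  set g := hf.1.mk f with hgdef
  have hgm : Measurable g := hf.1.stronglyMeasurable_mk.measurable
  have hfg : f =ᵐ[volume] g := hf.1.ae_eq_mk
  have hPhiae : (fun x : (Fin N → ℂ) × ℝ × ℝ × ℝ =>
      f (x.1, x.2.1 + x.2.2.2, x.2.2.1 + x.2.2.2)) =ᵐ[volume]
      (fun x => g (x.1, x.2.1 + x.2.2.2, x.2.2.1 + x.2.2.2)) :=
    (qmp_Phi (N := N)).ae_eq hfg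
  have hsharp_ae : fSharp χ f =ᵐ[volume] fSharp χ g := by
    filter_upwards [hPhiae] with x hx
    have hx' : f (x.1, x.2.1 + x.2.2.2, x.2.2.1 + x.2.2.2)
        = g (x.1, x.2.1 + x.2.2.2, x.2.2.1 + x.2.2.2) := hx
    simp only [fSharp, hx']
  have hmeasAE : AEStronglyMeasurable (fSharp χ f) volume := by
    have h1 : AEStronglyMeasurable (fun x : (Fin N → ℂ) × ℝ × ℝ × ℝ =>
        f (x.1, x.2.1 + x.2.2.2, x.2.2.1 + x.2.2.2)) volume :=
      hf.1.comp_quasiMeasurePreserving (qmp_Phi (N := N))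
    have h2 : AEStronglyMeasurable (fun x : (Fin N → ℂ) × ℝ × ℝ × ℝ =>
        ((2 * χ (x.2.1 + x.2.2.1) : ℝ) : ℂ)) volume :=
      (Continuous.aestronglyMeasurable (by fun_prop))
    exact h2.mul h1
  have hIsharp : ∫⁻ x, ENNReal.ofReal (‖fSharp χ f x‖ ^ p) =
      ENNReal.ofReal (∫ u : ℝ, 2 ^ (p - 1) * χ u ^ p) *
        ∫⁻ y, ENNReal.ofReal (‖f y‖ ^ p) := by
    have e1 : ∫⁻ x, ENNReal.ofReal (‖fSharp χ f x‖ ^ p)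
        = ∫⁻ x, ENNReal.ofReal (‖fSharp χ g x‖ ^ p) :=
      lintegral_congr_ae (hsharp_ae.mono fun x hx => by simp only [hx])
    have e2 : ∫⁻ y, ENNReal.ofReal (‖f y‖ ^ p)
        = ∫⁻ y, ENNReal.ofReal (‖g y‖ ^ p) :=
      lintegral_congr_ae (hfg.mono fun y hy => by simp only [hy])
    rw [e1, e2, key p hp χ hχ0 hχc hχsupp g hgm]
  have hconvf : ∀ y : (Fin N → ℂ) × ℝ × ℝ,
      (‖f y‖₊ : ℝ≥0∞) ^ p = ENNReal.ofReal (‖f y‖ ^ p) := by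
    intro y
    rw [← enorm_eq_nnnorm, ← ofReal_norm, ← ENNReal.ofReal_rpow_of_nonneg (norm_nonneg _) hp0.le]
  have hIf_ne : (∫⁻ y, ENNReal.ofReal (‖f y‖ ^ p)) ≠ ⊤ := by
    have h := hf.2
    rw [eLpNorm_eq_lintegral_rpow_enorm_toReal hpne0 ENNReal.ofReal_ne_top,
      ENNReal.toReal_ofReal hp0.le] at h
    have h2 := (ENNReal.rpow_lt_top_iff_of_pos (by positivity : (0:ℝ) < 1 / p)).mp h
    rw [show (∫⁻ y, ENNReal.ofReal (‖f y‖ ^ p))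
        = ∫⁻ y, ((‖f y‖₊ : ℝ≥0∞)) ^ p from lintegral_congr fun y => (hconvf y).symm]
    exact h2.ne
  have hmem : MemLp (fSharp χ f) (ENNReal.ofReal p) := by
    refine ⟨hmeasAE, ?_⟩
    rw [eLpNorm_eq_lintegral_rpow_enorm_toReal hpne0 ENNReal.ofReal_ne_top,
      ENNReal.toReal_ofReal hp0.le]
    simp only [enorm_eq_nnnorm]
    have hconv : (∫⁻ x, ((‖fSharp χ f x‖₊ : ℝ≥0∞)) ^ p)
        = ∫⁻ x, ENNReal.ofReal (‖fSharp χ f x‖ ^ p) := lintegral_congr fun x => by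
      rw [← enorm_eq_nnnorm, ← ofReal_norm, ← ENNReal.ofReal_rpow_of_nonneg (norm_nonneg _) hp0.le]
    rw [hconv, hIsharp]
    exact ENNReal.rpow_lt_top_of_nonneg (by positivity)
      (ENNReal.mul_ne_top ENNReal.ofReal_ne_top hIf_ne)
  have hBoch1 : ∫ x, ‖fSharp χ f x‖ ^ p
      = (∫⁻ x, ENNReal.ofReal (‖fSharp χ f x‖ ^ p)).toReal :=
    integral_eq_lintegral_of_nonneg_ae
      (Filter.Eventually.of_forall fun x => Real.rpow_nonneg (norm_nonneg _) p)
      ((hmeasAE.norm.aemeasurable.pow aemeasurable_const).aestronglyMeasurable)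
  have hBoch2 : ∫ y, ‖f y‖ ^ p = (∫⁻ y, ENNReal.ofReal (‖f y‖ ^ p)).toReal :=
    integral_eq_lintegral_of_nonneg_ae
      (Filter.Eventually.of_forall fun y => Real.rpow_nonneg (norm_nonneg _) p)
      ((hf.1.norm.aemeasurable.pow aemeasurable_const).aestronglyMeasurable)
  have hnorm_eq : ∫ x, ‖fSharp χ f x‖ ^ p
      = (∫ u : ℝ, 2 ^ (p - 1) * χ u ^ p) * ∫ y, ‖f y‖ ^ p := by
    rw [hBoch1, hIsharp, ENNReal.toReal_mul, ENNReal.toReal_ofReal hC0, hBoch2]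
  have hpush : pushForward (fSharp χ f) = f := by
    funext x
    show (∫ u : ℝ, fSharp χ f (x.1, x.2.1 - u, x.2.2 - u, u)) = f x
    have hval : ∀ u : ℝ, fSharp χ f (x.1, x.2.1 - u, x.2.2 - u, u) =
        ((2 * χ (x.2.1 + x.2.2 - 2 * u) : ℝ) : ℂ) * f x := by
      intro u
      show ((2 * χ (x.2.1 - u + (x.2.2 - u)) : ℝ) : ℂ) *
          f (x.1, x.2.1 - u + u, x.2.2 - u + u) = _
      have h1 : x.2.1 - u + (x.2.2 - u) = x.2.1 + x.2.2 - 2 * u := by ring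
      have h2 : x.2.1 - u + u = x.2.1 := by ring
      have h3 : x.2.2 - u + u = x.2.2 := by ring
      rw [h1, h2, h3]
    simp_rw [hval]
    rw [integral_mul_const]
    have hco : (∫ u : ℝ, ((2 * χ (x.2.1 + x.2.2 - 2 * u) : ℝ) : ℂ))
        = ((∫ u : ℝ, 2 * χ (x.2.1 + x.2.2 - 2 * u) : ℝ) : ℂ) := integral_ofReal
    rw [hco]
    have hreal : (∫ u : ℝ, 2 * χ (x.2.1 + x.2.2 - 2 * u)) = 1 := by
      rw [MeasureTheory.integral_const_mul, integral_comp_affine χ (x.2.1 + x.2.2), hχint]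
      norm_num
    rw [hreal]
    simp
  have hsmooth : (ContDiff ℝ (⊤ : ℕ∞) f ∧ HasCompactSupport f) →
      (ContDiff ℝ (⊤ : ℕ∞) (fSharp χ f) ∧ HasCompactSupport (fSharp χ f)) := by
    rintro ⟨hfc, hfs⟩
    constructor
    · have hL : ContDiff ℝ (⊤ : ℕ∞) fun x : (Fin N → ℂ) × ℝ × ℝ × ℝ => 2 * χ (x.2.1 + x.2.2.1) :=
        contDiff_const.mul (hχsmooth.comp (by fun_prop))
      have hc1 : ContDiff ℝ (⊤ : ℕ∞) fun x : (Fin N → ℂ) × ℝ × ℝ × ℝ =>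
          ((2 * χ (x.2.1 + x.2.2.1) : ℝ) : ℂ) :=
        Complex.ofRealCLM.contDiff.comp hL
      have hΦ : ContDiff ℝ (⊤ : ℕ∞) fun x : (Fin N → ℂ) × ℝ × ℝ × ℝ =>
          ((x.1, x.2.1 + x.2.2.2, x.2.2.1 + x.2.2.2) : (Fin N → ℂ) × ℝ × ℝ) := by
        fun_prop
      exact hc1.mul (hfc.comp hΦ)
    · obtain ⟨R, hR⟩ := hfs.isBounded.subset_closedBall 0
      set R' := max R 0 with hR'def
      have hR'0 : (0:ℝ) ≤ R' := le_max_right R 0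
      have hRK : tsupport f ⊆ Metric.closedBall 0 R' :=
        hR.trans (Metric.closedBall_subset_closedBall (le_max_left _ _))
      apply HasCompactSupport.intro
        (isCompact_closedBall (0 : (Fin N → ℂ) × ℝ × ℝ × ℝ) (3 * R' + 2))
      intro x hx
      by_contra hne
      have hne' : ((2 * χ (x.2.1 + x.2.2.1) : ℝ) : ℂ) *
          f (x.1, x.2.1 + x.2.2.2, x.2.2.1 + x.2.2.2) ≠ 0 := hne
      obtain ⟨hcne, hfne⟩ := mul_ne_zero_iff.mp hne'
      have hχne : χ (x.2.1 + x.2.2.1) ≠ 0 := by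
        intro h0; apply hcne; rw [h0]; norm_num
      have habs1 : |x.2.1 + x.2.2.1| ≤ 1 := by
        rcases hχsupp hχne with h | h
        · exact abs_le.mpr ⟨by linarith [h.1], h.2⟩
        · exact abs_le.mpr ⟨h.1, by linarith [h.2]⟩
      have hmemsupp : (x.1, x.2.1 + x.2.2.2, x.2.2.1 + x.2.2.2) ∈ tsupport f :=
        subset_tsupport f (Function.mem_support.mpr hfne)
      have hn : ‖((x.1, x.2.1 + x.2.2.2, x.2.2.1 + x.2.2.2) : (Fin N → ℂ) × ℝ × ℝ)‖ ≤ R' :=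
        mem_closedBall_zero_iff.mp (hRK hmemsupp)
      set y : (Fin N → ℂ) × ℝ × ℝ := (x.1, x.2.1 + x.2.2.2, x.2.2.1 + x.2.2.2) with hy
      have hz : ‖x.1‖ ≤ R' := le_trans (norm_fst_le y) hn
      have ht1 : |x.2.1 + x.2.2.2| ≤ R' := by
        have := le_trans (norm_fst_le y.2) (le_trans (norm_snd_le y) hn)
        simpa [Real.norm_eq_abs] using this
      have ht2 : |x.2.2.1 + x.2.2.2| ≤ R' := by
        have := le_trans (norm_snd_le y.2) (le_trans (norm_snd_le y) hn)
        simpa [Real.norm_eq_abs] using this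
      apply hx
      rw [Metric.mem_closedBall, dist_zero_right]
      obtain ⟨hA1, hA2⟩ := abs_le.mp habs1
      obtain ⟨hB1, hB2⟩ := abs_le.mp ht1
      obtain ⟨hC1, hC2⟩ := abs_le.mp ht2
      have hb1 : ‖x.2.1‖ ≤ 3 * R' + 2 := by
        rw [Real.norm_eq_abs]; apply abs_le.mpr; constructor <;> linarith
      have hb2 : ‖x.2.2.1‖ ≤ 3 * R' + 2 := by
        rw [Real.norm_eq_abs]; apply abs_le.mpr; constructor <;> linarith
      have hb3 : ‖x.2.2.2‖ ≤ 3 * R' + 2 := by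
        rw [Real.norm_eq_abs]; apply abs_le.mpr; constructor <;> linarith
      rw [Prod.norm_def]
      apply max_le (by linarith)
      rw [Prod.norm_def]
      apply max_le hb1
      rw [Prod.norm_def]
      exact max_le hb2 hb3
  exact ⟨hmem, hnorm_eq, hpush, hsmooth⟩
end
end

section
/- For r₁ > r₂ > 0 and r₃ > 0, define W_r(t') := ∫_ℝ 1_{(−r₁²,r₁²)}(t₁'−u) · 1_{(−r₂²,r₂²)}(t₂'−u) · 1_{(−r₃²,r₃²)}(u) du. Then for all t' ∈ ℝ²: (2/9)·min{r₂²,r₃²}·1_{P_{(r₁²+r₂²)/9, (r₂²+r₃²)/9}}(t') ≤ W_r(t') ≤ 2·min{r₂²,r₃²}·1_{P_{r₁²+r₂², r₂²+r₃²}}(t'), where P_{a,b} := {(t₁,t₂) ∈ ℝ² : |t₁−t₂| < a, |t₂| < b}. -/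
noncomputable section

open MeasureTheory

/-- W_r(t') = ∫_ℝ 1_{(−r₁²,r₁²)}(t₁'−u) 1_{(−r₂²,r₂²)}(t₂'−u) 1_{(−r₃²,r₃²)}(u) du. -/
def Wfun (r₁ r₂ r₃ : ℝ) (t : ℝ × ℝ) : ℝ :=
  ∫ u : ℝ,
    (Set.Ioo (-r₁ ^ 2) (r₁ ^ 2)).indicator (fun _ => (1 : ℝ)) (t.1 - u) *
    (Set.Ioo (-r₂ ^ 2) (r₂ ^ 2)).indicator (fun _ => (1 : ℝ)) (t.2 - u) *
    (Set.Ioo (-r₃ ^ 2) (r₃ ^ 2)).indicator (fun _ => (1 : ℝ)) u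

/-- The parallelogram P_{a,b} = {(t₁,t₂) : |t₁−t₂| < a, |t₂| < b}. -/
def Pset (a b : ℝ) : Set (ℝ × ℝ) := {t | |t.1 - t.2| < a ∧ |t.2| < b}

/-! `Wfun r₁ r₂ r₃ t` is the length of the intersection of the intervals `(t₁ - r₁², t₁ + r₁²)`,
`(t₂ - r₂², t₂ + r₂²)` and `(-r₃², r₃²)`. Being contained in the last two, it is at most
`2 min(r₂², r₃²)`; a common point `u` gives `|t₁ - u| < r₁²`, `|t₂ - u| < r₂²`, `|u| < r₃²`, which by
the triangle inequality puts `t` in `P_{r₁²+r₂², r₂²+r₃²}`. For the lower bound the length is the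
smallest right endpoint minus the largest left endpoint, and on the parallelogram shrunk by `9`
each right endpoint exceeds each left endpoint by at least `(2/9) min(r₂², r₃²)` once `r₂² ≤ r₁²`. -/

open Set

lemma indicator_Ioo_sub (A c u : ℝ) :
    (Ioo (-A) A).indicator (fun _ => (1 : ℝ)) (c - u)
      = (Ioo (c - A) (c + A)).indicator 1 u := by
  simp only [indicator, sub_mem_Ioo_iff_right, sub_neg_eq_add, Pi.one_apply]

lemma Wfun_eq_volume_real (r₁ r₂ r₃ : ℝ) (t : ℝ × ℝ) :
    Wfun r₁ r₂ r₃ t = volume.real (Ioo (t.1 - r₁ ^ 2) (t.1 + r₁ ^ 2) ∩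
      Ioo (t.2 - r₂ ^ 2) (t.2 + r₂ ^ 2) ∩ Ioo (-r₃ ^ 2) (r₃ ^ 2)) := by
  rw [← integral_indicator_one (by measurability), Wfun]
  simp only [indicator_Ioo_sub, inter_indicator_one, Pi.mul_apply]
  rfl

lemma Wfun_eq_max_sub (r₁ r₂ r₃ : ℝ) (t : ℝ × ℝ) :
    Wfun r₁ r₂ r₃ t =
      max (min (min (t.1 + r₁ ^ 2) (t.2 + r₂ ^ 2)) (r₃ ^ 2) -
        max (max (t.1 - r₁ ^ 2) (t.2 - r₂ ^ 2)) (-r₃ ^ 2)) 0 := by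
  rw [Wfun_eq_volume_real, Ioo_inter_Ioo, Ioo_inter_Ioo, Real.volume_real_Ioo]

lemma Wfun_nonneg (r₁ r₂ r₃ : ℝ) (t : ℝ × ℝ) : 0 ≤ Wfun r₁ r₂ r₃ t :=
  Wfun_eq_volume_real r₁ r₂ r₃ t ▸ measureReal_nonneg

lemma Wfun_le_two_mul_min (r₁ r₂ r₃ : ℝ) (t : ℝ × ℝ) :
    Wfun r₁ r₂ r₃ t ≤ 2 * min (r₂ ^ 2) (r₃ ^ 2) := by
  have h_len (A c : ℝ) : volume.real (Ioo (c - A ^ 2) (c + A ^ 2)) = 2 * A ^ 2 := by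
    rw [Real.volume_real_Ioo, max_eq_left (by nlinarith)]
    ring
  rw [Wfun_eq_volume_real, mul_min_of_nonneg _ _ zero_le_two]
  refine le_min ?_ ?_
  · calc _ ≤ volume.real (Ioo (t.2 - r₂ ^ 2) (t.2 + r₂ ^ 2)) :=
          measureReal_mono (inter_subset_left.trans inter_subset_right) measure_Ioo_lt_top.ne
      _ = 2 * r₂ ^ 2 := h_len r₂ t.2
  · calc _ ≤ volume.real (Ioo (0 - r₃ ^ 2) (0 + r₃ ^ 2)) := by
          rw [zero_sub, zero_add]
          exact measureReal_mono inter_subset_right measure_Ioo_lt_top.ne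
      _ = 2 * r₃ ^ 2 := h_len r₃ 0

lemma mem_Pset_of_Wfun_pos (r₁ r₂ r₃ : ℝ) {t : ℝ × ℝ} (hW : 0 < Wfun r₁ r₂ r₃ t) :
    t ∈ Pset (r₁ ^ 2 + r₂ ^ 2) (r₂ ^ 2 + r₃ ^ 2) := by
  rw [Wfun_eq_volume_real] at hW
  obtain ⟨u, ⟨⟨h₁, h₁'⟩, h₂, h₂'⟩, h₃, h₃'⟩ := nonempty_of_measureReal_ne_zero hW.ne'
  constructor <;> rw [abs_lt] <;> constructor <;> linarith

lemma le_Wfun_of_mem_Pset {r₁ r₂ r₃ : ℝ} (hr : r₂ ^ 2 ≤ r₁ ^ 2) {t : ℝ × ℝ}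
    (ht : t ∈ Pset ((r₁ ^ 2 + r₂ ^ 2) / 9) ((r₂ ^ 2 + r₃ ^ 2) / 9)) :
    2 / 9 * min (r₂ ^ 2) (r₃ ^ 2) ≤ Wfun r₁ r₂ r₃ t := by
  obtain ⟨⟨h₁₂, h₁₂'⟩, h₂, h₂'⟩ := And.imp abs_lt.mp abs_lt.mp ht
  have hm₂ := min_le_left (r₂ ^ 2) (r₃ ^ 2)
  have hm₃ := min_le_right (r₂ ^ 2) (r₃ ^ 2)
  have hb : 0 ≤ r₂ ^ 2 := by positivity
  have hc : 0 ≤ r₃ ^ 2 := by positivity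
  rw [Wfun_eq_max_sub]
  refine le_max_of_le_left ?_
  rw [le_sub_iff_add_le']
  refine le_min (le_min ?_ ?_) ?_ <;> rw [← le_sub_iff_add_le] <;>
    exact max_le (max_le (by linarith) (by linarith)) (by linarith)

theorem Wfun_two_sided_general (r₁ r₂ r₃ : ℝ) (h₂₁ : r₂ < r₁) (h₂ : 0 < r₂)
    (t : ℝ × ℝ) :
    (2 / 9) * min (r₂ ^ 2) (r₃ ^ 2) *
        (Pset ((r₁ ^ 2 + r₂ ^ 2) / 9) ((r₂ ^ 2 + r₃ ^ 2) / 9)).indicator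
          (fun _ => (1 : ℝ)) t
      ≤ Wfun r₁ r₂ r₃ t ∧
    Wfun r₁ r₂ r₃ t
      ≤ 2 * min (r₂ ^ 2) (r₃ ^ 2) *
          (Pset (r₁ ^ 2 + r₂ ^ 2) (r₂ ^ 2 + r₃ ^ 2)).indicator (fun _ => (1 : ℝ)) t := by
  have hsq : r₂ ^ 2 ≤ r₁ ^ 2 := pow_le_pow_left₀ h₂.le h₂₁.le 2
  constructor
  · by_cases ht : t ∈ Pset ((r₁ ^ 2 + r₂ ^ 2) / 9) ((r₂ ^ 2 + r₃ ^ 2) / 9)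
    · simpa [ht] using le_Wfun_of_mem_Pset hsq ht
    · simpa [ht] using Wfun_nonneg r₁ r₂ r₃ t
  · by_cases ht : t ∈ Pset (r₁ ^ 2 + r₂ ^ 2) (r₂ ^ 2 + r₃ ^ 2)
    · simpa [ht] using Wfun_le_two_mul_min r₁ r₂ r₃ t
    · simpa [ht] using mt (mem_Pset_of_Wfun_pos r₁ r₂ r₃) ht

/-- two-sided estimate for W_r in terms of indicator functions
of parallelograms. -/
theorem Wfun_two_sided (r₁ r₂ r₃ : ℝ) (h₂₁ : r₂ < r₁) (h₂ : 0 < r₂) (h₃ : 0 < r₃)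
    (t : ℝ × ℝ) :
    (2 / 9) * min (r₂ ^ 2) (r₃ ^ 2) *
        (Pset ((r₁ ^ 2 + r₂ ^ 2) / 9) ((r₂ ^ 2 + r₃ ^ 2) / 9)).indicator
          (fun _ => (1 : ℝ)) t
      ≤ Wfun r₁ r₂ r₃ t ∧
    Wfun r₁ r₂ r₃ t
      ≤ 2 * min (r₂ ^ 2) (r₃ ^ 2) *
          (Pset (r₁ ^ 2 + r₂ ^ 2) (r₂ ^ 2 + r₃ ^ 2)).indicator (fun _ => (1 : ℝ)) t :=
  Wfun_two_sided_general r₁ r₂ r₃ h₂₁ h₂ t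
end
end

section
/- For r₁ > r₂ and r₃ > 0, the tube T(0,r) := □_r × P_{r₁², max(r₂²,r₃²)} satisfies T(0, r/2) ⊆ π(B̃(0,r)) ⊆ T(0, 2r), where B̃(0,r) = B₁(0,r₁)×B₂(0,r₂)×B₃(0,r₃) is the product of Heisenberg gauge balls B_μ(0,r_μ) = (−r_μ,r_μ)^{2n_μ} × (−r_μ², r_μ²) and π(z,u₁,u₂,u₃) = (z, u₁+u₃, u₂+u₃). -/
noncomputable section

open Complex MeasureTheory

abbrev Heis (n : ℕ) := (Fin n → ℂ) × ℝ

def Phi {n : ℕ} (z w : Fin n → ℂ) : ℝ :=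
  2 * (∑ j, (starRingEnd ℂ) (z j) * w j).im

def Hmul {n : ℕ} (g h : Heis n) : Heis n :=
  (g.1 + h.1, g.2 + h.2 + Phi g.1 h.1)

def Hinv {n : ℕ} (g : Heis n) : Heis n := (-g.1, -g.2)

abbrev Ntilde (n₁ n₂ n₃ : ℕ) := Heis n₁ × Heis n₂ × Heis n₃

def NtildeMul {n₁ n₂ n₃ : ℕ} (g h : Ntilde n₁ n₂ n₃) : Ntilde n₁ n₂ n₃ :=
  (Hmul g.1 h.1, Hmul g.2.1 h.2.1, Hmul g.2.2 h.2.2)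

def NtildeInv {n₁ n₂ n₃ : ℕ} (g : Ntilde n₁ n₂ n₃) : Ntilde n₁ n₂ n₃ :=
  (Hinv g.1, Hinv g.2.1, Hinv g.2.2)

abbrev NGrp (n₁ n₂ n₃ : ℕ) := (Fin n₁ → ℂ) × (Fin n₂ → ℂ) × (Fin n₃ → ℂ) × ℝ × ℝ

def NMul {n₁ n₂ n₃ : ℕ} (g h : NGrp n₁ n₂ n₃) : NGrp n₁ n₂ n₃ :=
  (g.1 + h.1, g.2.1 + h.2.1, g.2.2.1 + h.2.2.1,
    g.2.2.2.1 + h.2.2.2.1 + Phi g.1 h.1 + Phi g.2.2.1 h.2.2.1,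
    g.2.2.2.2 + h.2.2.2.2 + Phi g.2.1 h.2.1 + Phi g.2.2.1 h.2.2.1)

def NInv {n₁ n₂ n₃ : ℕ} (g : NGrp n₁ n₂ n₃) : NGrp n₁ n₂ n₃ :=
  (-g.1, -g.2.1, -g.2.2.1, -g.2.2.2.1, -g.2.2.2.2)

def projPi {n₁ n₂ n₃ : ℕ} (g : Ntilde n₁ n₂ n₃) : NGrp n₁ n₂ n₃ :=
  (g.1.1, g.2.1.1, g.2.2.1, g.1.2 + g.2.2.2, g.2.1.2 + g.2.2.2)

/-- The cube □_r = (−r,r)^{2n} in ℂ^n ≅ ℝ^{2n}. -/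
def Box (n : ℕ) (r : ℝ) : Set (Fin n → ℂ) :=
  {z | ∀ j, |(z j).re| < r ∧ |(z j).im| < r}

/-- The Heisenberg gauge ball B_μ(0,r) = □_r × (−r², r²). -/
def HBall (n : ℕ) (r : ℝ) : Set (Heis n) :=
  {g | g.1 ∈ Box n r ∧ |g.2| < r ^ 2}

/-- The tube T(0,r) = □_r × P_{r₁², max(r₂²,r₃²)} (case r₁ > r₂). -/
def Tube (n₁ n₂ n₃ : ℕ) (r₁ r₂ r₃ : ℝ) : Set (NGrp n₁ n₂ n₃) :=
  {g | g.1 ∈ Box n₁ r₁ ∧ g.2.1 ∈ Box n₂ r₂ ∧ g.2.2.1 ∈ Box n₃ r₃ ∧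
    (g.2.2.2.1, g.2.2.2.2) ∈ Pset (r₁ ^ 2) (max (r₂ ^ 2) (r₃ ^ 2))}

/-- The product ball B̃(0,r) = B₁(0,r₁) × B₂(0,r₂) × B₃(0,r₃) in Ñ. -/
def ProdBall (n₁ n₂ n₃ : ℕ) (r₁ r₂ r₃ : ℝ) : Set (Ntilde n₁ n₂ n₃) :=
  {g | g.1 ∈ HBall n₁ r₁ ∧ g.2.1 ∈ HBall n₂ r₂ ∧ g.2.2 ∈ HBall n₃ r₃}

/-!
Both π(B̃(0,r)) and T(0,r) are of the form □_r × S for a planar set S: for the ball,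
S = π̂(I) is the set of sums (u₁ + u₃, u₂ + u₃) with |u_μ| < r_μ², and for the tube S is the
parallelogram P. The inclusions therefore reduce to two planar facts: P_{a, b+c} ⊆ π̂(I) for
half-widths a + b, b, c, obtained by splitting t₂ = u₂ + u₃ proportionally to b : c and taking
u₁ = t₁ − u₃ = (t₁ − t₂) + u₂; and π̂(I) ⊆ P_{a+b, b+c} by the triangle inequality.
-/

/-- π̂ of the open box (−a,a) × (−b,b) × (−c,c). -/
def SumSet (a b c : ℝ) : Set (ℝ × ℝ) :=
  {t | ∃ u₁ u₂ u₃ : ℝ, |u₁| < a ∧ |u₂| < b ∧ |u₃| < c ∧ t = (u₁ + u₃, u₂ + u₃)}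

def BoxProd (n₁ n₂ n₃ : ℕ) (r₁ r₂ r₃ : ℝ) (S : Set (ℝ × ℝ)) : Set (NGrp n₁ n₂ n₃) :=
  {g | g.1 ∈ Box n₁ r₁ ∧ g.2.1 ∈ Box n₂ r₂ ∧ g.2.2.1 ∈ Box n₃ r₃ ∧ (g.2.2.2.1, g.2.2.2.2) ∈ S}

theorem box_mono {n : ℕ} {r r' : ℝ} (h : r ≤ r') : Box n r ⊆ Box n r' :=
  fun _ hz j => ⟨(hz j).1.trans_le h, (hz j).2.trans_le h⟩

theorem boxProd_mono {n₁ n₂ n₃ : ℕ} {r₁ r₂ r₃ r₁' r₂' r₃' : ℝ} {S S' : Set (ℝ × ℝ)}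
    (h₁ : r₁ ≤ r₁') (h₂ : r₂ ≤ r₂') (h₃ : r₃ ≤ r₃') (hS : S ⊆ S') :
    BoxProd n₁ n₂ n₃ r₁ r₂ r₃ S ⊆ BoxProd n₁ n₂ n₃ r₁' r₂' r₃' S' :=
  fun _ ⟨hz₁, hz₂, hz₃, ht⟩ => ⟨box_mono h₁ hz₁, box_mono h₂ hz₂, box_mono h₃ hz₃, hS ht⟩

theorem image_projPi_prodBall (n₁ n₂ n₃ : ℕ) (r₁ r₂ r₃ : ℝ) :
    projPi '' ProdBall n₁ n₂ n₃ r₁ r₂ r₃ =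
      BoxProd n₁ n₂ n₃ r₁ r₂ r₃ (SumSet (r₁ ^ 2) (r₂ ^ 2) (r₃ ^ 2)) := by
  ext ⟨z₁, z₂, z₃, t₁, t₂⟩
  constructor
  · rintro ⟨⟨⟨z₁, u₁⟩, ⟨z₂, u₂⟩, ⟨z₃, u₃⟩⟩, ⟨⟨hz₁, hu₁⟩, ⟨hz₂, hu₂⟩, ⟨hz₃, hu₃⟩⟩, hπ⟩
    simp only [projPi, Prod.mk.injEq] at hπ
    obtain ⟨rfl, rfl, rfl, rfl, rfl⟩ := hπ
    exact ⟨hz₁, hz₂, hz₃, u₁, u₂, u₃, hu₁, hu₂, hu₃, rfl⟩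
  · rintro ⟨hz₁, hz₂, hz₃, u₁, u₂, u₃, hu₁, hu₂, hu₃, ht⟩
    simp only [Prod.mk.injEq] at ht
    obtain ⟨rfl, rfl⟩ := ht
    exact ⟨((z₁, u₁), (z₂, u₂), (z₃, u₃)), ⟨⟨hz₁, hu₁⟩, ⟨hz₂, hu₂⟩, ⟨hz₃, hu₃⟩⟩, rfl⟩

theorem pset_mono {a b a' b' : ℝ} (ha : a ≤ a') (hb : b ≤ b') : Pset a b ⊆ Pset a' b' :=
  fun _ ⟨h₁, h₂⟩ => ⟨h₁.trans_le ha, h₂.trans_le hb⟩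

theorem sumSet_mono {a b c a' b' c' : ℝ} (ha : a ≤ a') (hb : b ≤ b') (hc : c ≤ c') :
    SumSet a b c ⊆ SumSet a' b' c' :=
  fun _ ⟨u₁, u₂, u₃, h₁, h₂, h₃, ht⟩ =>
    ⟨u₁, u₂, u₃, h₁.trans_le ha, h₂.trans_le hb, h₃.trans_le hc, ht⟩

theorem exists_add_eq_of_abs_lt_add {b c t : ℝ} (hb : 0 < b) (hc : 0 < c) (ht : |t| < b + c) :
    ∃ u v : ℝ, u + v = t ∧ |u| < b ∧ |v| < c := by
  have hbc : 0 < b + c := by positivity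
  have share {d : ℝ} (hd : 0 < d) : |t * d / (b + c)| < d := by
    rw [abs_div, abs_mul, abs_of_pos hd, abs_of_pos hbc, div_lt_iff₀ hbc]
    nlinarith
  refine ⟨t * b / (b + c), t * c / (b + c), ?_, share hb, share hc⟩
  field_simp

theorem pset_subset_sumSet {a b c : ℝ} (hb : 0 < b) (hc : 0 < c) :
    Pset a (b + c) ⊆ SumSet (a + b) b c := by
  rintro ⟨t₁, t₂⟩ ⟨hdiff, ht₂⟩
  dsimp only at hdiff ht₂
  obtain ⟨u₂, u₃, hsum, hu₂, hu₃⟩ := exists_add_eq_of_abs_lt_add hb hc ht₂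
  have hu₁ : |t₁ - u₃| < a + b := by
    calc |t₁ - u₃| = |(t₁ - t₂) + u₂| := by rw [← hsum]; ring_nf
      _ ≤ |t₁ - t₂| + |u₂| := abs_add_le _ _
      _ < a + b := add_lt_add hdiff hu₂
  exact ⟨t₁ - u₃, u₂, u₃, hu₁, hu₂, hu₃, by rw [sub_add_cancel, hsum]⟩

theorem sumSet_subset_pset (a b c : ℝ) : SumSet a b c ⊆ Pset (a + b) (b + c) := by
  rintro _ ⟨u₁, u₂, u₃, hu₁, hu₂, hu₃, rfl⟩
  refine ⟨?_, (abs_add_le u₂ u₃).trans_lt (add_lt_add hu₂ hu₃)⟩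
  calc |u₁ + u₃ - (u₂ + u₃)| = |u₁ - u₂| := by ring_nf
    _ ≤ |u₁| + |u₂| := abs_sub _ _
    _ < a + b := add_lt_add hu₁ hu₂

/-- T(0,r/2) ⊆ π(B̃(0,r)) ⊆ T(0,2r) for r₁ > r₂ > 0, r₃ > 0. -/
theorem tube_ball_tube (n₁ n₂ n₃ : ℕ) (r₁ r₂ r₃ : ℝ)
    (h₂₁ : r₂ < r₁) (h₂ : 0 < r₂) (h₃ : 0 < r₃) :
    Tube n₁ n₂ n₃ (r₁ / 2) (r₂ / 2) (r₃ / 2) ⊆ projPi '' ProdBall n₁ n₂ n₃ r₁ r₂ r₃ ∧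
    projPi '' ProdBall n₁ n₂ n₃ r₁ r₂ r₃ ⊆ Tube n₁ n₂ n₃ (2 * r₁) (2 * r₂) (2 * r₃) := by
  have h₁ : 0 < r₁ := h₂.trans h₂₁
  have hsq : r₂ ^ 2 < r₁ ^ 2 := by gcongr
  have hr₂ : 0 < r₂ ^ 2 := by positivity
  have hr₃ : 0 < r₃ ^ 2 := by positivity
  rw [image_projPi_prodBall]
  constructor
  · refine boxProd_mono (by linarith) (by linarith) (by linarith) ?_
    calc Pset ((r₁ / 2) ^ 2) (max ((r₂ / 2) ^ 2) ((r₃ / 2) ^ 2))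
        ⊆ Pset (r₁ ^ 2 / 4) (r₂ ^ 2 / 4 + r₃ ^ 2 / 4) :=
          pset_mono (le_of_eq (by ring)) (max_le (by nlinarith) (by nlinarith))
      _ ⊆ SumSet (r₁ ^ 2 / 4 + r₂ ^ 2 / 4) (r₂ ^ 2 / 4) (r₃ ^ 2 / 4) :=
          pset_subset_sumSet (by positivity) (by positivity)
      _ ⊆ SumSet (r₁ ^ 2) (r₂ ^ 2) (r₃ ^ 2) := sumSet_mono (by linarith) (by linarith) (by linarith)
  · refine boxProd_mono (by linarith) (by linarith) (by linarith) ?_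
    calc SumSet (r₁ ^ 2) (r₂ ^ 2) (r₃ ^ 2) ⊆ Pset (r₁ ^ 2 + r₂ ^ 2) (r₂ ^ 2 + r₃ ^ 2) :=
          sumSet_subset_pset _ _ _
      _ ⊆ Pset ((2 * r₁) ^ 2) (max ((2 * r₂) ^ 2) ((2 * r₃) ^ 2)) :=
          pset_mono (by nlinarith) (by
            rcases le_total r₂ r₃ with h | h
            · exact le_max_of_le_right (by nlinarith)
            · exact le_max_of_le_left (by nlinarith))
end
end
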